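/- For all integers n and k, the generalized q-binomial coefficient satisfies the reflection formula qbinom(n,k) = (-1)^k · sgn(k) · q^{k(2n-k+1)/2} · qbinom(k-n-1, k), where sgn(k) = 1 if k ≥ 0 and -1 if k < 0. -/

import Mathlib

/-!
The substitution `n ↦ k - n - 1` is an involution that exchanges the regions `0 ≤ k ≤ n` and
`n < 0 ≤ k` and preserves the region `k ≤ n < 0`. For `n < 0 ≤ k` the reflection formula is the
definition itself, and for `0 ≤ k ≤ n` it is the same identity read backwards, the two powers of
`q` cancelling because their exponents add up to `0`. For `k ≤ n < 0` it comes down to the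
symmetry `gauss a b = gauss a (a - b)`, which follows by induction from the two `q`-Pascal rules.
Everywhere else both sides vanish.
-/

open LaurentPolynomial in
/-- The ordinary Gaussian binomial coefficient as a (Laurent) polynomial in `q = T 1`,
defined by the `q`-Pascal rule; it is `0` when the lower entry exceeds the upper one. -/
noncomputable def gauss : ℕ → ℕ → LaurentPolynomial ℤ
  | _, 0 => 1
  | 0, _ + 1 => 0
  | a + 1, b + 1 => gauss a b + T ((b : ℤ) + 1) * gauss a (b + 1)

open LaurentPolynomial in
/-- The generalized `q`-binomial coefficient, a Laurent polynomial in `q = T 1`,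
extended to arbitrary integer entries. -/
noncomputable def qbinom (n k : ℤ) : LaurentPolynomial ℤ :=
  if 0 ≤ k ∧ k ≤ n then gauss n.toNat k.toNat
  else if n < 0 ∧ 0 ≤ k then
    (-1) ^ k.toNat * T (k * (2 * n - k + 1) / 2) * gauss (k - n - 1).toNat k.toNat
  else if k ≤ n ∧ n < 0 then
    (-1) ^ (n - k).toNat * T ((n * (n + 1) - k * (k + 1)) / 2) *
      gauss (-k - 1).toNat (-n - 1).toNat
  else 0

open LaurentPolynomial

lemma T_ediv_two_mul_T_ediv_two {R : Type*} [Semiring R] {a b c : ℤ} (hb : 2 ∣ b)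
    (h : a + b = c) : (T (a / 2) : R[T;T⁻¹]) * T (b / 2) = T (c / 2) := by
  rw [← T_add, ← Int.add_ediv_of_dvd_right hb, h]

lemma two_dvd_mul_two_mul_sub_add_one (n k : ℤ) : 2 ∣ k * (2 * n - k + 1) := by
  obtain ⟨t, ht⟩ := Int.even_mul_pred_self k
  exact ⟨n * k - t, by linear_combination -ht⟩

lemma gauss_zero_right (a : ℕ) : gauss a 0 = 1 := by
  cases a <;> rfl

lemma gauss_succ_succ (a b : ℕ) :
    gauss (a + 1) (b + 1) = gauss a b + T ((b : ℤ) + 1) * gauss a (b + 1) := rfl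

lemma gauss_of_lt {a b : ℕ} (h : a < b) : gauss a b = 0 := by
  induction a generalizing b with
  | zero => obtain ⟨b, rfl⟩ := Nat.exists_eq_succ_of_ne_zero h.ne'; rfl
  | succ a ih =>
    obtain ⟨b, rfl⟩ := Nat.exists_eq_succ_of_ne_zero (by omega : b ≠ 0)
    rw [gauss_succ_succ, ih (by omega), ih (by omega), mul_zero, add_zero]

lemma gauss_self (a : ℕ) : gauss a a = 1 := by
  induction a with
  | zero => rfl
  | succ a ih => rw [gauss_succ_succ, ih, gauss_of_lt a.lt_succ_self, mul_zero, add_zero]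

lemma gauss_succ_succ' (a b : ℕ) :
    gauss (a + 1) (b + 1) = T ((a : ℤ) - b) * gauss a b + gauss a (b + 1) := by
  induction a generalizing b with
  | zero => cases b <;> simp [gauss]
  | succ a ih =>
    cases b with
    | zero =>
      conv_lhs => rw [gauss_succ_succ, ih]
      conv_rhs => rw [gauss_succ_succ a 0]
      simp only [gauss_zero_right, mul_add, ← mul_assoc, ← T_add]
      push_cast
      ring_nf
    | succ b =>
      conv_lhs => rw [gauss_succ_succ, ih, ih]
      conv_rhs => rw [gauss_succ_succ a b, gauss_succ_succ a (b + 1)]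
      simp only [mul_add, ← mul_assoc, ← T_add]
      push_cast
      ring_nf

lemma gauss_symm {a b c : ℕ} (h : b + c = a) : gauss a b = gauss a c := by
  induction a generalizing b c with
  | zero =>
    obtain ⟨rfl, rfl⟩ : b = 0 ∧ c = 0 := by omega
    rfl
  | succ a ih =>
    match b, c with
    | 0, c => rw [show c = a + 1 by omega, gauss_zero_right, gauss_self]
    | b + 1, 0 => rw [show b = a by omega, gauss_zero_right, gauss_self]
    | b + 1, c + 1 =>
      rw [gauss_succ_succ, gauss_succ_succ' a c, @ih b (c + 1) (by omega),
        @ih (b + 1) c (by omega), show (a : ℤ) - c = b + 1 by omega, add_comm]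

lemma qbinom_of_nonneg_of_le {n k : ℤ} (hk : 0 ≤ k) (hkn : k ≤ n) :
    qbinom n k = gauss n.toNat k.toNat := by
  rw [qbinom, if_pos ⟨hk, hkn⟩]

lemma qbinom_of_neg_of_nonneg {n k : ℤ} (hn : n < 0) (hk : 0 ≤ k) :
    qbinom n k = (-1) ^ k.toNat * T (k * (2 * n - k + 1) / 2) * qbinom (k - n - 1) k := by
  rw [qbinom, if_neg (by omega), if_pos ⟨hn, hk⟩, qbinom_of_nonneg_of_le hk (by omega)]

lemma qbinom_of_le_of_neg {n k : ℤ} (hkn : k ≤ n) (hn : n < 0) :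
    qbinom n k = (-1) ^ (n - k).toNat * T ((n * (n + 1) - k * (k + 1)) / 2) *
      gauss (-k - 1).toNat (-n - 1).toNat := by
  rw [qbinom, if_neg (by omega), if_neg (by omega), if_pos ⟨hkn, hn⟩]

lemma qbinom_eq_zero {n k : ℤ} (h : 0 ≤ n ∧ n < k ∨ k < 0 ∧ (n < k ∨ 0 ≤ n)) :
    qbinom n k = 0 := by
  rw [qbinom, if_neg (by omega), if_neg (by omega), if_neg (by omega)]

lemma qbinom_reflect_of_nonneg_of_le {n k : ℤ} (hk : 0 ≤ k) (hkn : k ≤ n) :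
    qbinom n k = (-1) ^ k.toNat * T (k * (2 * n - k + 1) / 2) * qbinom (k - n - 1) k := by
  have h := qbinom_of_neg_of_nonneg (n := k - n - 1) (by omega) hk
  rw [show k - (k - n - 1) - 1 = n by ring] at h
  have hT : (T (k * (2 * n - k + 1) / 2) : ℤ[T;T⁻¹]) *
      T (k * (2 * (k - n - 1) - k + 1) / 2) = 1 := by
    rw [T_ediv_two_mul_T_ediv_two (two_dvd_mul_two_mul_sub_add_one _ _) (c := 0) (by ring),
      Int.zero_ediv, T_zero]
  have hs : ((-1) ^ k.toNat * (-1) ^ k.toNat : ℤ[T;T⁻¹]) = 1 := by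
    rw [← mul_pow, neg_one_mul, neg_neg, one_pow]
  rw [h]
  linear_combination (-(T (k * (2 * n - k + 1) / 2) * T (k * (2 * (k - n - 1) - k + 1) / 2)
    * qbinom n k)) * hs - qbinom n k * hT

lemma qbinom_reflect_of_le_of_neg {n k : ℤ} (hkn : k ≤ n) (hn : n < 0) :
    qbinom n k = -(-1) ^ k.natAbs * T (k * (2 * n - k + 1) / 2) * qbinom (k - n - 1) k := by
  rw [qbinom_of_le_of_neg hkn hn, qbinom_of_le_of_neg (n := k - n - 1) (by omega) (by omega),
    gauss_symm (a := (-k - 1).toNat) (b := (-(k - n - 1) - 1).toNat) (c := (-n - 1).toNat)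
      (by omega)]
  have hT : (T (((k - n - 1) * (k - n - 1 + 1) - k * (k + 1)) / 2) : ℤ[T;T⁻¹]) *
      T (k * (2 * n - k + 1) / 2) = T ((n * (n + 1) - k * (k + 1)) / 2) :=
    T_ediv_two_mul_T_ediv_two (two_dvd_mul_two_mul_sub_add_one _ _) (by ring)
  have hs : ((-1) ^ (n - k).toNat : ℤ[T;T⁻¹]) =
      -(-1) ^ k.natAbs * (-1) ^ (k - n - 1 - k).toNat := by
    rw [show -(-1) ^ k.natAbs * (-1) ^ (k - n - 1 - k).toNat =
      ((-1) ^ (k.natAbs + (k - n - 1 - k).toNat + 1) : ℤ[T;T⁻¹]) by ring]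
    exact neg_one_pow_congr (by simp only [Nat.even_add_one, Nat.even_iff]; omega)
  rw [hs, ← hT]
  ring

open LaurentPolynomial in
theorem qbinom_reflect (n k : ℤ) :
    qbinom n k =
      (((-1) ^ k.natAbs * (if 0 ≤ k then 1 else -1) : ℤ) : LaurentPolynomial ℤ) *
        T (k * (2 * n - k + 1) / 2) * qbinom (k - n - 1) k := by
  push_cast
  rcases le_or_gt 0 k with hk | hk
  · rw [if_pos hk, mul_one, show k.natAbs = k.toNat by omega]
    rcases lt_or_ge n 0 with hn | hn
    · exact qbinom_of_neg_of_nonneg hn hk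
    rcases le_or_gt k n with hkn | hkn
    · exact qbinom_reflect_of_nonneg_of_le hk hkn
    · rw [qbinom_eq_zero (by omega), qbinom_eq_zero (by omega), mul_zero]
  · rw [if_neg (by omega), mul_neg_one]
    by_cases h : k ≤ n ∧ n < 0
    · exact qbinom_reflect_of_le_of_neg h.1 h.2
    · rw [qbinom_eq_zero (by omega), qbinom_eq_zero (by omega), mul_zero]
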